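/- arXiv:1401.1329 — 2 statements merged into one kernel-verified Lean document; each statement's English description precedes it below -/
import Mathlib

section
/- Fix m ≥ 2 and b < 0 with w_b(r) = sinh(√(-b) r)/√(-b). Then the model space M_{w_b}^m is balanced from below: (∫₀^r w_b(s)^{m-1} ds / w_b(r)^{m-1}) · (w_b'(r)/w_b(r)) ≥ 1/m for all r > 0. -/
/-!
Writing `I = ∫₀^r w^{m-1}`, the inequality `q_w η_w ≥ 1/m` reads `w(r)^m ≤ m w'(r) I`. When
`w(0) = 0`, `w ≥ 0` and `w'` is nondecreasing, this follows from
`w(r)^m = ∫₀^r m w^{m-1} w' ≤ m w'(r) ∫₀^r w^{m-1}`. The hyperbolic warping function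
`sinh(κr)/κ` has these properties, with `w' = cosh(κ ·)`.
-/

open MeasureTheory Set

theorem pow_le_mul_deriv_mul_integral_pow {w : ℝ → ℝ} (hw : ContDiff ℝ 1 w) (hw0 : w 0 = 0)
    {r : ℝ} (hr : 0 ≤ r) (hw_nonneg : ∀ s ∈ Icc 0 r, 0 ≤ w s)
    (hw'_mono : MonotoneOn (deriv w) (Icc 0 r)) {m : ℕ} (hm : 1 ≤ m) :
    w r ^ m ≤ m * deriv w r * ∫ s in (0:ℝ)..r, w s ^ (m - 1) := by
  have hdiff : Differentiable ℝ w := hw.differentiable one_ne_zero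
  have hw'_cont : Continuous (deriv w) := hw.continuous_deriv le_rfl
  have hftc : ∫ s in (0:ℝ)..r, (m : ℝ) * w s ^ (m - 1) * deriv w s = w r ^ m := by
    rw [intervalIntegral.integral_eq_sub_of_hasDerivAt (f := fun s => w s ^ m)
      (fun s _ => (hdiff s).hasDerivAt.pow m)
      (by apply Continuous.intervalIntegrable; fun_prop)]
    simp [hw0, zero_pow (by omega : m ≠ 0)]
  calc w r ^ m = ∫ s in (0:ℝ)..r, (m : ℝ) * w s ^ (m - 1) * deriv w s := hftc.symm
    _ ≤ ∫ s in (0:ℝ)..r, (m : ℝ) * deriv w r * w s ^ (m - 1) := by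
      refine intervalIntegral.integral_mono_on hr
        (by apply Continuous.intervalIntegrable; fun_prop)
        (by apply Continuous.intervalIntegrable; fun_prop) fun s hs => ?_
      have hw's : deriv w s ≤ deriv w r := hw'_mono hs ⟨hr, le_rfl⟩ hs.2
      calc (m : ℝ) * w s ^ (m - 1) * deriv w s ≤ m * w s ^ (m - 1) * deriv w r :=
            mul_le_mul_of_nonneg_left hw's (by have := hw_nonneg s hs; positivity)
        _ = m * deriv w r * w s ^ (m - 1) := by ring
    _ = m * deriv w r * ∫ s in (0:ℝ)..r, w s ^ (m - 1) := intervalIntegral.integral_const_mul _ _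

theorem one_div_le_integral_pow_div_mul_logDeriv {w : ℝ → ℝ} (hw : ContDiff ℝ 1 w)
    (hw0 : w 0 = 0) {r : ℝ} (hr : 0 ≤ r) (hwr : 0 < w r) (hw_nonneg : ∀ s ∈ Icc 0 r, 0 ≤ w s)
    (hw'_mono : MonotoneOn (deriv w) (Icc 0 r)) {m : ℕ} (hm : 1 ≤ m) :
    1 / (m : ℝ) ≤ ((∫ s in (0:ℝ)..r, w s ^ (m - 1)) / w r ^ (m - 1)) * (deriv w r / w r) := by
  have hkey := pow_le_mul_deriv_mul_integral_pow hw hw0 hr hw_nonneg hw'_mono hm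
  have hpow : w r ^ (m - 1) * w r = w r ^ m := by rw [← pow_succ, Nat.sub_add_cancel hm]
  have hm0 : (0 : ℝ) < m := by exact_mod_cast hm
  rw [div_mul_div_comm, hpow, div_le_div_iff₀ hm0 (by positivity)]
  linarith

theorem deriv_sinh_mul_div (κ : ℝ) (hκ : κ ≠ 0) :
    deriv (fun r => Real.sinh (κ * r) / κ) = fun r => Real.cosh (κ * r) := by
  ext r
  have h := (((hasDerivAt_id r).const_mul κ).sinh).div_const κ
  simp only [id, mul_one] at h
  rw [h.deriv, mul_div_cancel_right₀ _ hκ]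

/-- For `m ≥ 2` and `b < 0`, the hyperbolic model `M_{w_b}^m` is balanced
from below: `q_{w_b}(r) · (w_b'(r)/w_b(r)) ≥ 1/m` for all `r > 0`. -/
theorem hyperbolic_model_balanced_from_below
    (m : ℕ) (hm : 2 ≤ m) (b : ℝ) (hb : b < 0) (w : ℝ → ℝ)
    (hw : w = fun r => Real.sinh (Real.sqrt (-b) * r) / Real.sqrt (-b)) :
    ∀ r > (0:ℝ),
      ((∫ s in (0:ℝ)..r, w s ^ (m - 1)) / w r ^ (m - 1)) * (deriv w r / w r)
        ≥ 1 / (m:ℝ) := by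
  intro r hr
  set κ := Real.sqrt (-b)
  have hκ : 0 < κ := Real.sqrt_pos.mpr (neg_pos.mpr hb)
  have hw' : deriv w = fun s => Real.cosh (κ * s) := hw ▸ deriv_sinh_mul_div κ hκ.ne'
  subst hw
  refine one_div_le_integral_pow_div_mul_logDeriv (by fun_prop) (by simp) hr.le
    (by positivity) (fun s hs => ?_) ?_ (by omega)
  · exact div_nonneg (Real.sinh_nonneg_iff.mpr (mul_nonneg hκ.le hs.1)) hκ.le
  · rw [hw']
    intro s hs t ht hst
    exact Real.cosh_strictMonoOn.monotoneOn (mul_nonneg hκ.le hs.1) (mul_nonneg hκ.le ht.1)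
      (mul_le_mul_of_nonneg_left hst hκ.le)
end

section
/- Let V, F : (0,∞) → (0,∞) be non-decreasing functions with V ≤ F, V bounded above by S < ∞, V differentiable, and suppose 0 ≤ F(s) − V(s) ≤ S·s·(log V)'(s) for all s. Then sup_s F(s) = sup_s V(s), i.e., lim_{s→∞} F(s) = lim_{s→∞} V(s). -/
/-!
If `F s` exceeded `sup V` by some `ε > 0`, then, `F` being non-decreasing, `F t - V t ≥ ε` for all
`t ≥ s`, so the bound gives `(log V)'(t) ≥ ε / (S t)`. Integrating, `log V` would grow at least like
`(ε / S) log t` and hence be unbounded, contradicting `V ≤ S`. Thus `sup F ≤ sup V`, and `V ≤ F`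
gives the reverse inequality.
-/

open Real Set Filter

theorem add_mul_log_sub_log_le_of_div_le_deriv {f : ℝ → ℝ} {a c : ℝ} (ha : 0 < a)
    (hf : ∀ t ≥ a, DifferentiableAt ℝ f t) (hf' : ∀ t > a, c / t ≤ deriv f t) :
    ∀ t ≥ a, f a + c * (log t - log a) ≤ f t := by
  have hdiff : ∀ t ≥ a, DifferentiableAt ℝ (fun t => f t - c * log t) t := fun t ht =>
    (hf t ht).sub ((differentiableAt_log (ha.trans_le ht).ne').const_mul c)
  have hmono : MonotoneOn (fun t => f t - c * log t) (Ici a) := by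
    refine monotoneOn_of_deriv_nonneg (convex_Ici a)
      (fun t ht => (hdiff t ht).continuousAt.continuousWithinAt)
      (fun t ht => (hdiff t (interior_subset ht)).differentiableWithinAt) ?_
    rw [interior_Ici]
    intro t (ht : a < t)
    have ht0 : t ≠ 0 := (ha.trans ht).ne'
    rw [deriv_fun_sub (hf t ht.le) ((differentiableAt_log ht0).const_mul c),
      deriv_const_mul _ (differentiableAt_log ht0), deriv_log, ← div_eq_mul_inv]
    exact sub_nonneg.2 (hf' t ht)
  intro t ht
  have := hmono self_mem_Ici ht ht
  linarith

theorem exists_deriv_le_div_of_bddAbove {f : ℝ → ℝ} {a c : ℝ} (ha : 0 < a) (hc : 0 < c)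
    (hf : ∀ t ≥ a, DifferentiableAt ℝ f t) (hbdd : BddAbove (f '' Ici a)) :
    ∃ t ≥ a, deriv f t ≤ c / t := by
  by_contra! hlt
  obtain ⟨M, hM⟩ := hbdd
  have hgrowth : Tendsto (fun t => c * log t + (f a - c * log a)) atTop atTop :=
    (tendsto_log_atTop.const_mul_atTop hc).atTop_add tendsto_const_nhds
  obtain ⟨t, hta, htM⟩ :=
    ((eventually_ge_atTop a).and (hgrowth.eventually_gt_atTop M)).exists
  have hft := add_mul_log_sub_log_le_of_div_le_deriv ha hf
    (fun t ht => (hlt t ht.le).le) t hta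
  have := hM ⟨t, hta, rfl⟩
  linarith

theorem le_sSup_of_sub_le_mul_deriv_log {V F : ℝ → ℝ} {S : ℝ}
    (hV_pos : ∀ s > (0:ℝ), 0 < V s) (hF_mono : MonotoneOn F (Ioi 0))
    (hVS : ∀ s > (0:ℝ), V s ≤ S) (hV_diff : ∀ s > (0:ℝ), DifferentiableAt ℝ V s)
    (hbound : ∀ s > (0:ℝ), F s - V s ≤ S * s * deriv (fun t => log (V t)) s)
    {s : ℝ} (hs : 0 < s) :
    F s ≤ sSup (V '' Ioi 0) := by
  have hS : 0 < S := (hV_pos s hs).trans_le (hVS s hs)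
  have hbddV : BddAbove (V '' Ioi 0) := ⟨S, by rintro _ ⟨t, ht, rfl⟩; exact hVS t ht⟩
  have hbdd_log : BddAbove ((fun t => log (V t)) '' Ici s) := by
    refine ⟨log S, ?_⟩
    rintro _ ⟨t, ht, rfl⟩
    have ht0 : 0 < t := hs.trans_le ht
    exact log_le_log (hV_pos t ht0) (hVS t ht0)
  refine le_of_forall_pos_le_add fun ε hε => ?_
  obtain ⟨t, hst, ht⟩ := exists_deriv_le_div_of_bddAbove hs (div_pos hε hS)
    (fun t ht => (hV_diff t (hs.trans_le ht)).log (hV_pos t (hs.trans_le ht)).ne') hbdd_log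
  have ht0 : 0 < t := hs.trans_le hst
  calc F s ≤ F t := hF_mono hs ht0 hst
    _ ≤ V t + S * t * deriv (fun t => log (V t)) t := by linarith [hbound t ht0]
    _ ≤ sSup (V '' Ioi 0) + S * t * (ε / S / t) := by
        gcongr
        exact le_csSup hbddV ⟨t, ht0, rfl⟩
    _ = sSup (V '' Ioi 0) + ε := by field_simp

theorem flux_eq_volume_sup_general
    (V F : ℝ → ℝ) (S : ℝ)
    (hV_pos : ∀ s > (0:ℝ), 0 < V s)
    (hF_mono : MonotoneOn F (Set.Ioi 0))
    (hVF : ∀ s > (0:ℝ), V s ≤ F s)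
    (hVS : ∀ s > (0:ℝ), V s ≤ S)
    (hV_diff : ∀ s > (0:ℝ), DifferentiableAt ℝ V s)
    (hbound : ∀ s > (0:ℝ),
      F s - V s ≤ S * s * deriv (fun t => Real.log (V t)) s) :
    sSup (F '' Set.Ioi 0) = sSup (V '' Set.Ioi 0) := by
  have hF_le : ∀ s > (0:ℝ), F s ≤ sSup (V '' Ioi 0) := fun s hs =>
    le_sSup_of_sub_le_mul_deriv_log hV_pos hF_mono hVS hV_diff hbound hs
  have hbddF : BddAbove (F '' Ioi 0) := ⟨_, by rintro _ ⟨s, hs, rfl⟩; exact hF_le s hs⟩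
  apply le_antisymm
  · exact csSup_le (nonempty_Ioi.image F) (by rintro _ ⟨s, hs, rfl⟩; exact hF_le s hs)
  · exact csSup_le (nonempty_Ioi.image V) fun _ ⟨s, hs, hVs⟩ =>
      le_csSup_of_le hbddF ⟨s, hs, rfl⟩ (hVs ▸ hVF s hs)

/-- If `V ≤ F` are positive non-decreasing on `(0,∞)`, `V` differentiable
and bounded by `S`, and `0 ≤ F(s) − V(s) ≤ S·s·(log V)'(s)` for all `s > 0`, then
`sup F = sup V` (the flux and volume quotients have the same limit). -/
theorem flux_eq_volume_sup
    (V F : ℝ → ℝ) (S : ℝ)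
    (hV_pos : ∀ s > (0:ℝ), 0 < V s) (hF_pos : ∀ s > (0:ℝ), 0 < F s)
    (hV_mono : MonotoneOn V (Set.Ioi 0)) (hF_mono : MonotoneOn F (Set.Ioi 0))
    (hVF : ∀ s > (0:ℝ), V s ≤ F s)
    (hVS : ∀ s > (0:ℝ), V s ≤ S)
    (hV_diff : ∀ s > (0:ℝ), DifferentiableAt ℝ V s)
    (hbound : ∀ s > (0:ℝ),
      F s - V s ≤ S * s * deriv (fun t => Real.log (V t)) s) :
    sSup (F '' Set.Ioi 0) = sSup (V '' Set.Ioi 0) :=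
  flux_eq_volume_sup_general V F S hV_pos hF_mono hVF hVS hV_diff hbound
end
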